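/- arXiv:1010.2219 — 8 statements merged into one kernel-verified Lean document; each statement's English description precedes it below -/
import Mathlib

section
/- Let P = (P, ≤_P) be a finite partial order and let φ : P → 𝒫(Q) be a set representation of P. Then φ satisfies |φ(p)| = |⋃_{p' <_P p} φ(p')| + 1 for all p ∈ P if and only if φ satisfies both: (a) |φ(p) − ⋃_{p' <_P p} φ(p')| = 1 for all p ∈ P, and (b) for all p ∈ P and all q ∈ φ(p) there exists p' ≤_P p with {q} = φ(p') − ⋃_{p'' <_P p'} φ(p''). -/
namespace SatOrder

variable {α Q : Type}

/-- A set representation of a partial order: an injective map into sets such that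
`p < p'` iff `φ p ⊊ φ p'`. -/
def IsSetRep [PartialOrder α] (φ : α → Set Q) : Prop :=
  Function.Injective φ ∧ ∀ p p' : α, p < p' ↔ φ p ⊂ φ p'

/-- The residual set `φ p − ⋃_{p' < p} φ p'`. -/
def resid [PartialOrder α] (φ : α → Set Q) (p : α) : Set Q :=
  φ p \ ⋃ p' ∈ {x : α | x < p}, φ p'

/-- A parsimonious set representation: every residual is a singleton, and every element of `φ p`
is the residual element of some `p' ≤ p`. -/
def IsParsimonious [PartialOrder α] (φ : α → Set Q) : Prop :=
  IsSetRep φ ∧ (∀ p : α, ∃ q : Q, resid φ p = {q}) ∧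
    (∀ p : α, ∀ q ∈ φ p, ∃ p' : α, p' ≤ p ∧ resid φ p' = {q})

/-- `a` is the map `α_φ`, i.e. `{a p} = φ p − ⋃_{p' < p} φ p'` for all `p`. -/
def IsAlpha [PartialOrder α] (φ : α → Set Q) (a : α → Q) : Prop :=
  ∀ p : α, resid φ p = {a p}

/-- A partial order is saturated if `α_φ` is injective for every parsimonious
set representation `φ`. -/
def IsSaturated (α : Type) [PartialOrder α] : Prop :=
  ∀ (Q : Type) (φ : α → Set Q), IsParsimonious φ →
    ∀ a : α → Q, IsAlpha φ a → Function.Injective a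

/-- A bouquet with maximum `m`: a set with at least two elements whose maximum is `m`. -/
def IsBouquet [PartialOrder α] (B : Set α) (m : α) : Prop :=
  B.Nontrivial ∧ m ∈ B ∧ ∀ b ∈ B, b ≤ m

/-- A fan: a bouquet such that no two distinct elements of `F − {max F}` are comparable. -/
def IsFan [PartialOrder α] (F : Set α) (m : α) : Prop :=
  IsBouquet F m ∧ ∀ b ∈ F \ {m}, ∀ b' ∈ F \ {m}, b ≤ b' → b = b'

/-- Two sets are parallel if no element of one is comparable with any element of the other. -/
def ParallelB [PartialOrder α] (B₀ B₁ : Set α) : Prop :=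
  ∀ b₀ ∈ B₀, ∀ b₁ ∈ B₁, ¬ b₀ ≤ b₁ ∧ ¬ b₁ ≤ b₀

/-- `m` skewly tops `B₀, B₁` (with maxima `m₀, m₁`). -/
def SkewlyTops [PartialOrder α] (m : α) (B₀ B₁ : Set α) (m₀ m₁ : α) : Prop :=
  (m₀ ≤ m ∧ ¬ m₁ ≤ m ∧ ∀ p ∈ B₁ \ {m₁}, p ≤ m) ∨
  (m₁ ≤ m ∧ ¬ m₀ ≤ m ∧ ∀ p ∈ B₀ \ {m₀}, p ≤ m)

/-- `B₀` and `B₁` (with maxima `m₀, m₁`) are skewly topped. -/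
def SkewlyTopped [PartialOrder α] (B₀ B₁ : Set α) (m₀ m₁ : α) : Prop :=
  ∃ m : α, SkewlyTops m B₀ B₁ m₀ m₁

/-! Since `φ` is monotone, `⋃_{p' < p} φ p' ⊆ φ p`, so whenever `φ p` is finite the cardinality
condition at `p` says exactly that the residual of `p` is a singleton, i.e. (a). The cardinality
condition forces `φ p` to be finite; conversely, under (a) and (b) `φ p` lies in the range of
`α_φ`, which is finite. Condition (b) follows from (a) alone: if `q ∈ φ p`, a minimal `p' ≤ p` with
`q ∈ φ p'` has `q` in its residual. -/

theorem IsSetRep.monotone [PartialOrder α] {φ : α → Set Q} (hφ : IsSetRep φ) : Monotone φ :=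
  StrictMono.monotone fun p p' h => (hφ.2 p p').1 h

section Residual

variable [PartialOrder α] {φ : α → Set Q}

theorem biUnion_lt_subset (hφ : Monotone φ) (p : α) : ⋃ p' ∈ {x : α | x < p}, φ p' ⊆ φ p :=
  Set.iUnion₂_subset fun _ h => hφ h.le

theorem ncard_resid_eq_one_iff (hφ : Monotone φ) {p : α} (hfin : (φ p).Finite) :
    (resid φ p).ncard = 1 ↔ (φ p).ncard = (⋃ p' ∈ {x : α | x < p}, φ p').ncard + 1 := by
  have := Set.ncard_sdiff_add_ncard_of_subset (biUnion_lt_subset hφ p) hfin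
  rw [resid]
  omega

theorem exists_le_mem_resid [WellFoundedLT α] {p : α} {q : Q} (hq : q ∈ φ p) :
    ∃ p' ≤ p, q ∈ resid φ p' := by
  obtain ⟨p', ⟨hp'p, hqp'⟩, hmin⟩ :=
    wellFounded_lt.has_min {x | x ≤ p ∧ q ∈ φ x} ⟨p, le_rfl, hq⟩
  refine ⟨p', hp'p, hqp', ?_⟩
  simp only [Set.mem_iUnion, Set.mem_ofPred_eq, not_exists]
  exact fun x hx hqx => hmin x ⟨hx.le.trans hp'p, hqx⟩ hx

theorem subset_range_of_isAlpha {a : α → Q} (ha : IsAlpha φ a) {p : α}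
    (hb : ∀ q ∈ φ p, ∃ p' : α, p' ≤ p ∧ resid φ p' = {q}) : φ p ⊆ Set.range a := fun q hq => by
  obtain ⟨p', -, hp'⟩ := hb q hq
  exact ⟨p', Set.singleton_injective ((ha p').symm.trans hp')⟩

end Residual

/-- For a finite partial order, a set representation satisfies the cardinality
form of parsimony iff it satisfies conditions (a) and (b). -/
theorem parsimonious_card_iff {α Q : Type} [PartialOrder α] [Finite α]
    (φ : α → Set Q) (hφ : IsSetRep φ) :
    (∀ p : α, (φ p).ncard = (⋃ p' ∈ {x : α | x < p}, φ p').ncard + 1) ↔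
      ((∀ p : α, ∃ q : Q, resid φ p = {q}) ∧
        (∀ p : α, ∀ q ∈ φ p, ∃ p' : α, p' ≤ p ∧ resid φ p' = {q})) := by
  constructor
  · intro hcard
    have hresid (p : α) : ∃ q, resid φ p = {q} := by
      have hfin : (φ p).Finite := Set.finite_of_ncard_ne_zero (by rw [hcard p]; omega)
      exact Set.ncard_eq_one.1 ((ncard_resid_eq_one_iff hφ.monotone hfin).2 (hcard p))
    refine ⟨hresid, fun p q hq => ?_⟩
    obtain ⟨p', hp'p, hqp'⟩ := exists_le_mem_resid hq
    obtain ⟨q', hq'⟩ := hresid p'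
    exact ⟨p', hp'p, Set.mem_singleton_iff.1 (hq' ▸ hqp') ▸ hq'⟩
  · rintro ⟨hresid, hb⟩ p
    choose a ha using hresid
    have hfin : (φ p).Finite := (Set.finite_range a).subset (subset_range_of_isAlpha ha (hb p))
    rw [← ncard_resid_eq_one_iff hφ.monotone hfin, ha p, Set.ncard_singleton]

end SatOrder
end

section
/- If P = (P, ≤_P) is a finite partial order, then every two parallel fans in P are skewly topped if and only if every two parallel bouquets in P are skewly topped. -/
namespace SatOrder

variable {α Q : Type}

/-!
Fans are bouquets, so one direction is immediate. Conversely, in a finite order the maximal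
elements of `B − {m}` together with `m` form a fan inside the bouquet `B`, and every element of
`B − {m}` lies below one of them. Hence the fans extracted from two parallel bouquets are parallel,
and any element skewly topping the fans also skewly tops the bouquets.
-/

section

variable [PartialOrder α]

def fanOf (B : Set α) (m : α) : Set α :=
  insert m {x | Maximal (· ∈ B \ {m}) x}

theorem fanOf_subset {B : Set α} {m : α} (hm : m ∈ B) : fanOf B m ⊆ B := by
  rintro x (rfl | hx)
  · exact hm
  · exact hx.1.1

theorem maximal_of_mem_fanOf_diff {B : Set α} {m x : α} (hx : x ∈ fanOf B m \ {m}) :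
    Maximal (· ∈ B \ {m}) x :=
  hx.1.resolve_left hx.2

theorem exists_le_mem_fanOf_diff [Finite α] {B : Set α} {m p : α} (hp : p ∈ B \ {m}) :
    ∃ x ∈ fanOf B m \ {m}, p ≤ x := by
  obtain ⟨x, hpx, hx⟩ := Finite.exists_le_maximal hp
  exact ⟨x, ⟨Set.mem_insert_of_mem _ hx, hx.1.2⟩, hpx⟩

theorem IsBouquet.isFan_fanOf [Finite α] {B : Set α} {m : α} (hB : IsBouquet B m) :
    IsFan (fanOf B m) m := by
  obtain ⟨b, hb, hbm⟩ := hB.1.exists_ne m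
  obtain ⟨x, hx, -⟩ := exists_le_mem_fanOf_diff ⟨hb, hbm⟩
  refine ⟨⟨⟨m, Set.mem_insert _ _, x, hx.1, Ne.symm hx.2⟩, Set.mem_insert _ _,
    fun y hy ↦ hB.2.2 y (fanOf_subset hB.2.1 hy)⟩, fun y hy z hz hyz ↦ ?_⟩
  exact le_antisymm hyz ((maximal_of_mem_fanOf_diff hy).2 (maximal_of_mem_fanOf_diff hz).1 hyz)

theorem ParallelB.mono {A₀ A₁ B₀ B₁ : Set α} (h : ParallelB B₀ B₁)
    (h₀ : A₀ ⊆ B₀) (h₁ : A₁ ⊆ B₁) : ParallelB A₀ A₁ :=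
  fun a₀ ha₀ a₁ ha₁ ↦ h a₀ (h₀ ha₀) a₁ (h₁ ha₁)

theorem SkewlyTops.of_dominated {m m₀ m₁ : α} {F₀ F₁ B₀ B₁ : Set α}
    (h : SkewlyTops m F₀ F₁ m₀ m₁) (h₀ : ∀ p ∈ B₀ \ {m₀}, ∃ x ∈ F₀ \ {m₀}, p ≤ x)
    (h₁ : ∀ p ∈ B₁ \ {m₁}, ∃ x ∈ F₁ \ {m₁}, p ≤ x) : SkewlyTops m B₀ B₁ m₀ m₁ := by
  rcases h with ⟨hm₀, hm₁, hF₁⟩ | ⟨hm₁, hm₀, hF₀⟩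
  · refine Or.inl ⟨hm₀, hm₁, fun p hp ↦ ?_⟩
    obtain ⟨x, hx, hpx⟩ := h₁ p hp
    exact hpx.trans (hF₁ x hx)
  · refine Or.inr ⟨hm₁, hm₀, fun p hp ↦ ?_⟩
    obtain ⟨x, hx, hpx⟩ := h₀ p hp
    exact hpx.trans (hF₀ x hx)

end

/-- In a finite partial order, every two parallel fans are skewly topped iff
every two parallel bouquets are skewly topped. -/
theorem fans_topped_iff_bouquets_topped_of_finite {α : Type} [PartialOrder α] [Finite α] :
    (∀ (F₀ F₁ : Set α) (m₀ m₁ : α), IsFan F₀ m₀ → IsFan F₁ m₁ → ParallelB F₀ F₁ →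
        SkewlyTopped F₀ F₁ m₀ m₁) ↔
      (∀ (B₀ B₁ : Set α) (m₀ m₁ : α), IsBouquet B₀ m₀ → IsBouquet B₁ m₁ → ParallelB B₀ B₁ →
        SkewlyTopped B₀ B₁ m₀ m₁) := by
  refine ⟨fun hF B₀ B₁ m₀ m₁ hB₀ hB₁ hpar ↦ ?_,
    fun hB F₀ F₁ m₀ m₁ hF₀ hF₁ ↦ hB F₀ F₁ m₀ m₁ hF₀.1 hF₁.1⟩
  have hparF : ParallelB (fanOf B₀ m₀) (fanOf B₁ m₁) :=
    hpar.mono (fanOf_subset hB₀.2.1) (fanOf_subset hB₁.2.1)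
  obtain ⟨m, hm⟩ := hF _ _ m₀ m₁ hB₀.isFan_fanOf hB₁.isFan_fanOf hparF
  exact ⟨m, hm.of_dominated (fun _ ↦ exists_le_mem_fanOf_diff) (fun _ ↦ exists_le_mem_fanOf_diff)⟩

end SatOrder
end

section
/- A partial order P = (P, ≤_P) is saturated if and only if every two parallel bouquets in P are skewly topped. -/
/-!
A parsimonious representation is determined by its labelling `a = α_φ`, namely
`φ p = a '' Iic p`; so saturation says that every labelling with antichain fibres for which
`p ↦ a '' Iic p` reflects the order is injective. If `a p₀ = a p₁` with `p₀ ≠ p₁`, then `pᵢ`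
together with the points below it whose labels do not occur below `p₁₋ᵢ` form two parallel
bouquets, and a skew top `m` of them would get `φ p₁₋ᵢ ⊆ φ m`. Conversely, gluing the tops of two
parallel bouquets without a skew top gives a non-injective such labelling.
-/

namespace SatOrder

variable {α Q : Type}

open Set

section SetRep

variable [PartialOrder α] {φ : α → Set Q} {a : α → Q}

theorem isSetRep_iff : IsSetRep φ ↔ ∀ p p', φ p ⊆ φ p' ↔ p ≤ p' := by
  refine ⟨fun ⟨hinj, hlt⟩ p p' => ⟨fun h => ?_, fun h => ?_⟩, fun h => ⟨?_, fun p p' => ?_⟩⟩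
  · rcases h.ssubset_or_eq with h | h
    · exact ((hlt p p').2 h).le
    · exact (hinj h).le
  · rcases h.eq_or_lt with rfl | h
    · exact subset_rfl
    · exact ((hlt p p').1 h).subset
  · exact fun p p' e => le_antisymm ((h p p').1 e.le) ((h p' p).1 e.ge)
  · rw [ssubset_def, h, h, lt_iff_le_not_ge]

theorem IsAlpha.mem (ha : IsAlpha φ a) (p : α) : a p ∈ φ p := by
  have : a p ∈ resid φ p := by rw [ha p]; rfl
  exact this.1

theorem IsAlpha.notMem_of_lt (ha : IsAlpha φ a) {x p : α} (hx : x < p) : a p ∉ φ x := by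
  have : a p ∈ resid φ p := by rw [ha p]; rfl
  exact fun h => this.2 (mem_biUnion hx h)

theorem IsAlpha.ne_of_lt (ha : IsAlpha φ a) {x y : α} (hxy : x < y) : a x ≠ a y :=
  fun e => ha.notMem_of_lt hxy (e ▸ ha.mem x)

theorem IsParsimonious.eq_image_Iic (hP : IsParsimonious φ) (ha : IsAlpha φ a) (p : α) :
    φ p = a '' Iic p := by
  ext q
  constructor
  · intro hq
    obtain ⟨p', hp', hres⟩ := hP.2.2 p q hq
    exact ⟨p', hp', singleton_eq_singleton_iff.1 ((ha p').symm.trans hres)⟩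
  · rintro ⟨x, hx, rfl⟩
    exact (isSetRep_iff.1 hP.1 x p).2 hx (ha.mem x)

variable {f : α → Q}

theorem isAlpha_image_Iic (hf : ∀ x y, x < y → f x ≠ f y) : IsAlpha (fun p => f '' Iic p) f := by
  intro p
  ext q
  simp only [resid, mem_sdiff, mem_iUnion, mem_image, mem_Iic, mem_ofPred_eq, mem_singleton_iff,
    exists_prop, not_exists, not_and]
  constructor
  · rintro ⟨⟨y, hy, rfl⟩, hnot⟩
    rcases hy.eq_or_lt with rfl | hlt
    · rfl
    · exact (hnot y hlt y le_rfl rfl).elim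
  · rintro rfl
    exact ⟨⟨p, le_rfl, rfl⟩, fun x hx y hy e => hf y p (hy.trans_lt hx) e⟩

theorem isParsimonious_image_Iic (hf : ∀ x y, x < y → f x ≠ f y)
    (hrefl : ∀ p p', f '' Iic p ⊆ f '' Iic p' → p ≤ p') :
    IsParsimonious (fun p => f '' Iic p) := by
  refine ⟨isSetRep_iff.2 fun p p' => ⟨hrefl p p', fun h => image_mono (Iic_subset_Iic.2 h)⟩,
    fun p => ⟨f p, isAlpha_image_Iic hf p⟩, ?_⟩
  rintro p _ ⟨x, hx, rfl⟩
  exact ⟨x, hx, isAlpha_image_Iic hf x⟩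

theorem isSaturated_iff_forall_image_Iic :
    IsSaturated α ↔ ∀ (Q : Type) (f : α → Q), (∀ x y, x < y → f x ≠ f y) →
      (∀ p p', f '' Iic p ⊆ f '' Iic p' → p ≤ p') → Function.Injective f := by
  refine ⟨fun hsat Q f hf hrefl => hsat Q _ (isParsimonious_image_Iic hf hrefl) f
    (isAlpha_image_Iic hf), fun H Q φ hP a ha => H Q a (fun _ _ => ha.ne_of_lt) ?_⟩
  intro p p' h
  rw [← hP.eq_image_Iic ha, ← hP.eq_image_Iic ha] at h
  exact (isSetRep_iff.1 hP.1 p p').1 h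

end SetRep

section ResidualBouquet

variable [PartialOrder α] {f : α → Q} {u v m : α}

def residualBouquet (f : α → Q) (u v : α) : Set α :=
  insert u {x | x < u ∧ f x ∉ f '' Iic v}

theorem le_of_mem_residualBouquet {x : α} (hx : x ∈ residualBouquet f u v) : x ≤ u := by
  rcases hx with rfl | hx
  exacts [le_rfl, hx.1.le]

/-- Every label below `u` occurs below `v` or on the bouquet: the label of `u` itself is `f v`. -/
theorem le_of_forall_residualBouquet_le (hrefl : ∀ p p', f '' Iic p ⊆ f '' Iic p' → p ≤ p')
    (huv : f u = f v) (hv : v ≤ m) (hm : ∀ x ∈ residualBouquet f u v \ {u}, x ≤ m) : u ≤ m := by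
  refine hrefl u m ?_
  rintro _ ⟨x, hx, rfl⟩
  rcases (show x ≤ u from hx).eq_or_lt with rfl | hlt
  · exact ⟨v, hv, huv.symm⟩
  by_cases hxv : f x ∈ f '' Iic v
  · obtain ⟨y, hy, hyx⟩ := hxv
    exact ⟨y, le_trans hy hv, hyx⟩
  · exact ⟨x, hm x ⟨mem_insert_of_mem _ ⟨hlt, hxv⟩, hlt.ne⟩, rfl⟩

theorem not_le_of_map_eq (hf : ∀ x y, x < y → f x ≠ f y) (huv : f u = f v) (hne : u ≠ v) :
    ¬ u ≤ v :=
  fun h => hf u v (h.lt_of_ne hne) huv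

theorem isBouquet_residualBouquet (hf : ∀ x y, x < y → f x ≠ f y)
    (hrefl : ∀ p p', f '' Iic p ⊆ f '' Iic p' → p ≤ p')
    (huv : f u = f v) (hne : u ≠ v) : IsBouquet (residualBouquet f u v) u := by
  refine ⟨?_, mem_insert u _, fun x => le_of_mem_residualBouquet⟩
  by_contra htriv
  refine not_le_of_map_eq hf huv hne (le_of_forall_residualBouquet_le hrefl huv le_rfl ?_)
  exact fun x hx => (hx.2 (not_nontrivial_iff.1 htriv hx.1 (mem_insert u _))).elim

theorem not_le_of_mem_residualBouquet (hf : ∀ x y, x < y → f x ≠ f y) (huv : f u = f v)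
    (hne : u ≠ v) {b b' : α} (hb : b ∈ residualBouquet f u v)
    (hb' : b' ∈ residualBouquet f v u) : ¬ b ≤ b' := by
  intro h
  have hbv : b ≤ v := h.trans (le_of_mem_residualBouquet hb')
  rcases hb with rfl | ⟨-, hb⟩
  · exact not_le_of_map_eq hf huv hne hbv
  · exact hb ⟨b, hbv, rfl⟩

theorem parallelB_residualBouquet (hf : ∀ x y, x < y → f x ≠ f y) (huv : f u = f v)
    (hne : u ≠ v) : ParallelB (residualBouquet f u v) (residualBouquet f v u) :=
  fun _ hb _ hb' => ⟨not_le_of_mem_residualBouquet hf huv hne hb hb',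
    not_le_of_mem_residualBouquet hf huv.symm hne.symm hb' hb⟩

end ResidualBouquet

theorem isSaturated_of_forall_skewlyTopped [PartialOrder α]
    (H : ∀ (B₀ B₁ : Set α) (m₀ m₁ : α), IsBouquet B₀ m₀ → IsBouquet B₁ m₁ → ParallelB B₀ B₁ →
      SkewlyTopped B₀ B₁ m₀ m₁) :
    IsSaturated α := by
  refine isSaturated_iff_forall_image_Iic.2 fun Q f hf hrefl p₀ p₁ hq => ?_
  by_contra hne
  obtain ⟨m, hm⟩ := H _ _ p₀ p₁ (isBouquet_residualBouquet hf hrefl hq hne)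
    (isBouquet_residualBouquet hf hrefl hq.symm (Ne.symm hne)) (parallelB_residualBouquet hf hq hne)
  rcases hm with ⟨h₀, h₁, hm⟩ | ⟨h₁, h₀, hm⟩
  · exact h₁ (le_of_forall_residualBouquet_le hrefl hq.symm h₀ hm)
  · exact h₀ (le_of_forall_residualBouquet_le hrefl hq h₁ hm)

theorem eq_or_of_update_id_eq [DecidableEq α] {m₀ m₁ : α} (x y : α)
    (h : Function.update id m₁ m₀ x = Function.update id m₁ m₀ y) :
    x = y ∨ x = m₀ ∧ y = m₁ ∨ x = m₁ ∧ y = m₀ := by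
  simp only [Function.update_apply, id] at h
  split_ifs at h <;> subst_vars <;> tauto

section Gluing

variable [PartialOrder α] {B₀ B₁ : Set α} {m₀ m₁ : α} {f : α → Q}

theorem forall_le_of_image_Iic_subset (hB₁ : ∀ b ∈ B₁, b ≤ m₁) (hm₀ : m₀ ∉ B₁)
    (hf : ∀ x y, f x = f y → x = y ∨ x = m₀ ∧ y = m₁ ∨ x = m₁ ∧ y = m₀) {p : α}
    (hsub : f '' Iic m₁ ⊆ f '' Iic p) : ∀ b ∈ B₁ \ {m₁}, b ≤ p := by
  rintro b ⟨hb, hbm⟩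
  obtain ⟨y, hy, hyb⟩ := hsub ⟨b, hB₁ b hb, rfl⟩
  rcases hf y b hyb with rfl | ⟨-, rfl⟩ | ⟨-, rfl⟩
  exacts [hy, (hbm rfl).elim, (hm₀ hb).elim]

/-- A failure at `p = m₁` (or `m₀`) would make `p'` a skew top. -/
theorem le_of_image_Iic_subset_of_not_skewlyTopped (hB₀ : IsBouquet B₀ m₀)
    (hB₁ : IsBouquet B₁ m₁) (hpar : ParallelB B₀ B₁) (hnst : ¬ SkewlyTopped B₀ B₁ m₀ m₁)
    (hf : ∀ x y, f x = f y → x = y ∨ x = m₀ ∧ y = m₁ ∨ x = m₁ ∧ y = m₀) {p p' : α}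
    (hsub : f '' Iic p ⊆ f '' Iic p') : p ≤ p' := by
  obtain ⟨x, hx, hxp⟩ := hsub ⟨p, le_rfl, rfl⟩
  rcases hf x p hxp with rfl | ⟨rfl, rfl⟩ | ⟨rfl, rfl⟩
  · exact hx
  · by_contra h₁
    exact hnst ⟨p', Or.inl ⟨hx, h₁, forall_le_of_image_Iic_subset hB₁.2.2
      (fun h => (hpar x hB₀.2.1 x h).1 le_rfl) hf hsub⟩⟩
  · by_contra h₀
    exact hnst ⟨p', Or.inr ⟨hx, h₀, forall_le_of_image_Iic_subset hB₀.2.2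
      (fun h => (hpar x h x hB₁.2.1).1 le_rfl) (fun x y h => (hf x y h).imp_right Or.symm) hsub⟩⟩

theorem skewlyTopped_of_isSaturated (hsat : IsSaturated α) (hB₀ : IsBouquet B₀ m₀)
    (hB₁ : IsBouquet B₁ m₁) (hpar : ParallelB B₀ B₁) : SkewlyTopped B₀ B₁ m₀ m₁ := by
  classical
  by_contra hnst
  have hm := hpar m₀ hB₀.2.1 m₁ hB₁.2.1
  have hf : ∀ x y, x < y → Function.update id m₁ m₀ x ≠ Function.update id m₁ m₀ y := by
    intro x y hxy h
    rcases eq_or_of_update_id_eq x y h with rfl | ⟨rfl, rfl⟩ | ⟨rfl, rfl⟩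
    exacts [hxy.ne rfl, hm.1 hxy.le, hm.2 hxy.le]
  have hinj := isSaturated_iff_forall_image_Iic.1 hsat α _ hf
    fun _ _ => le_of_image_Iic_subset_of_not_skewlyTopped hB₀ hB₁ hpar hnst eq_or_of_update_id_eq
  exact hm.1 (hinj (by simp [Function.update_apply])).le

end Gluing

/-- A partial order is saturated iff every two parallel bouquets in it are
skewly topped. -/
theorem saturated_iff_bouquets_topped {α : Type} [PartialOrder α] :
    IsSaturated α ↔
      ∀ (B₀ B₁ : Set α) (m₀ m₁ : α), IsBouquet B₀ m₀ → IsBouquet B₁ m₁ → ParallelB B₀ B₁ →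
        SkewlyTopped B₀ B₁ m₀ m₁ :=
  ⟨fun hsat _ _ _ _ => skewlyTopped_of_isSaturated hsat, isSaturated_of_forall_skewlyTopped⟩

end SatOrder
end

section
/- Let P = (P, ≤_P) be a partial order, let φ be a parsimonious set representation of P, and suppose p₀, p₁ ∈ P are distinct elements with α_φ(p₀) = α_φ(p₁). Then for each i ∈ {0,1} there exists p <_P p_i which is ≤_P-incomparable with p_{1−i}. -/
namespace SatOrder

variable {α Q : Type}

namespace IsSetRep

variable [PartialOrder α] {φ : α → Set Q}

theorem subset_of_le (h : IsSetRep φ) {p p' : α} (hle : p ≤ p') : φ p ⊆ φ p' := by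
  rcases hle.eq_or_lt with rfl | hlt
  · exact subset_rfl
  · exact ((h.2 p p').1 hlt).subset

theorem le_of_subset (h : IsSetRep φ) {p p' : α} (hsub : φ p ⊆ φ p') : p ≤ p' := by
  by_cases hφ : φ p = φ p'
  · exact (h.1 hφ).le
  · exact ((h.2 p p').2 (hsub.ssubset_of_ne hφ)).le

end IsSetRep

namespace IsAlpha

variable [PartialOrder α] {φ : α → Set Q} {a : α → Q}

theorem mem_resid (ha : IsAlpha φ a) (p : α) : a p ∈ resid φ p := by
  rw [ha p]
  rfl

theorem mem_s11 (ha : IsAlpha φ a) (p : α) : a p ∈ φ p :=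
  (ha.mem_resid p).1

theorem not_mem_of_lt (ha : IsAlpha φ a) {p p' : α} (hlt : p' < p) : a p ∉ φ p' :=
  fun hmem => (ha.mem_resid p).2 (Set.mem_biUnion hlt hmem)

theorem not_lt_of_eq (ha : IsAlpha φ a) {p₀ p₁ : α} (heq : a p₀ = a p₁) : ¬ p₀ < p₁ :=
  fun hlt => ha.not_mem_of_lt hlt (heq ▸ ha.mem_s11 p₀)

theorem exists_le_eq (ha : IsAlpha φ a) (hφ : IsParsimonious φ) {p : α} {q : Q}
    (hq : q ∈ φ p) : ∃ p' ≤ p, a p' = q := by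
  obtain ⟨p', hle, hres⟩ := hφ.2.2 p q hq
  exact ⟨p', hle, Set.singleton_eq_singleton_iff.mp ((ha p').symm.trans hres)⟩

/-- An element of `φ p₀ \ φ p₁` is `a p` for some `p ≤ p₀`; since `a p₀ ∈ φ p₁`, this `p` is the
required predecessor. -/
theorem exists_lt_incomparable_of_eq (ha : IsAlpha φ a) (hφ : IsParsimonious φ) {p₀ p₁ : α}
    (hne : p₀ ≠ p₁) (heq : a p₀ = a p₁) : ∃ p : α, p < p₀ ∧ ¬ p ≤ p₁ ∧ ¬ p₁ ≤ p := by
  have hrep := hφ.1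
  have hnot_sub : ¬ φ p₀ ⊆ φ p₁ := fun hsub =>
    ha.not_lt_of_eq heq ((hrep.le_of_subset hsub).lt_of_ne hne)
  obtain ⟨q, hq₀, hq₁⟩ := Set.not_subset.mp hnot_sub
  obtain ⟨p, hle, rfl⟩ := ha.exists_le_eq hφ hq₀
  have hlt : p < p₀ := hle.lt_of_ne fun h => hq₁ (h ▸ heq ▸ ha.mem_s11 p₁)
  exact ⟨p, hlt, fun hle₁ => hq₁ (hrep.subset_of_le hle₁ (ha.mem_s11 p)),
    fun hge => ha.not_lt_of_eq heq.symm (hge.trans_lt hlt)⟩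

end IsAlpha

/-- If `φ` is parsimonious and `p₀ ≠ p₁` with `α_φ p₀ = α_φ p₁`, then for each
`i` there exists `p < p_i` incomparable with `p_{1-i}`. -/
theorem exists_incomparable_predecessor_of_alpha_eq {α Q : Type} [PartialOrder α]
    (φ : α → Set Q) (hφ : IsParsimonious φ) (a : α → Q) (ha : IsAlpha φ a)
    (p₀ p₁ : α) (hne : p₀ ≠ p₁) (heq : a p₀ = a p₁) :
    (∃ p : α, p < p₀ ∧ ¬ p ≤ p₁ ∧ ¬ p₁ ≤ p) ∧
      (∃ p : α, p < p₁ ∧ ¬ p ≤ p₀ ∧ ¬ p₀ ≤ p) :=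
  ⟨ha.exists_lt_incomparable_of_eq hφ hne heq,
    ha.exists_lt_incomparable_of_eq hφ hne.symm heq.symm⟩

end SatOrder
end

section
/- There exists a countable partial order P = (P, ≤_P) in which every two parallel fans are skewly topped, but which contains two parallel bouquets that are not skewly topped; in particular, P is not saturated. -/
namespace SatOrder

variable {α Q : Type}

variable {P : Type}

/-- The strict order associated with a relation `le`. -/
def rlt (le : P → P → Prop) (a b : P) : Prop := le a b ∧ ¬ le b a

/-- A bouquet with maximum `m`, with respect to the order relation `le`. -/
def IsBouquetR (le : P → P → Prop) (B : Set P) (m : P) : Prop :=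
  B.Nontrivial ∧ m ∈ B ∧ ∀ b ∈ B, le b m

/-- A fan with maximum `m`, with respect to the order relation `le`. -/
def IsFanR (le : P → P → Prop) (F : Set P) (m : P) : Prop :=
  IsBouquetR le F m ∧ ∀ b ∈ F \ {m}, ∀ b' ∈ F \ {m}, le b b' → b = b'

/-- Parallel sets with respect to the order relation `le`. -/
def ParallelR (le : P → P → Prop) (B₀ B₁ : Set P) : Prop :=
  ∀ b₀ ∈ B₀, ∀ b₁ ∈ B₁, ¬ le b₀ b₁ ∧ ¬ le b₁ b₀

/-- `m` skewly tops `B₀, B₁` (with maxima `m₀, m₁`), with respect to `le`. -/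
def SkewlyTopsR (le : P → P → Prop) (m : P) (B₀ B₁ : Set P) (m₀ m₁ : P) : Prop :=
  (le m₀ m ∧ ¬ le m₁ m ∧ ∀ p ∈ B₁ \ {m₁}, le p m) ∨
  (le m₁ m ∧ ¬ le m₀ m ∧ ∀ p ∈ B₀ \ {m₀}, le p m)

/-- `B₀` and `B₁` (with maxima `m₀, m₁`) are skewly topped, with respect to `le`. -/
def SkewlyToppedR (le : P → P → Prop) (B₀ B₁ : Set P) (m₀ m₁ : P) : Prop :=
  ∃ m : P, SkewlyTopsR le m B₀ B₁ m₀ m₁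

/-- A set representation with respect to the order relation `le`. -/
def IsSetRepR (le : P → P → Prop) (φ : P → Set Q) : Prop :=
  Function.Injective φ ∧ ∀ p p' : P, rlt le p p' ↔ φ p ⊂ φ p'

/-- The residual set `φ p − ⋃_{p' < p} φ p'`, with respect to `le`. -/
def residR (le : P → P → Prop) (φ : P → Set Q) (p : P) : Set Q :=
  φ p \ ⋃ p' ∈ {x : P | rlt le x p}, φ p'

/-- A parsimonious set representation with respect to `le`. -/
def IsParsimoniousR (le : P → P → Prop) (φ : P → Set Q) : Prop :=
  IsSetRepR le φ ∧ (∀ p : P, ∃ q : Q, residR le φ p = {q}) ∧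
    (∀ p : P, ∀ q ∈ φ p, ∃ p' : P, le p' p ∧ residR le φ p' = {q})

/-- Saturation with respect to the order relation `le`. -/
def IsSaturatedR (le : P → P → Prop) : Prop :=
  ∀ (Q : Type) (φ : P → Set Q), IsParsimoniousR le φ →
    ∀ a : P → Q, (∀ p : P, residR le φ p = {a p}) → Function.Injective a

/-!
The poset: chains `a 0 < a 1 < ⋯ < c` and `b 0 < b 1 < ⋯ < d`, a chain `v 0 < v 1 < ⋯` above
`d` with `a i ≤ v m ↔ i ≤ m`, and a chain `u 0 < u 1 < ⋯` above `a`, `b`, `c`, `d` with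
`v m < u n ↔ m < n`. The bouquets `{a i} ∪ {c}` and `{b i} ∪ {d}` are not skewly topped: an
element above `d` and every `a i` (no `v m` qualifies) or above `c` and every `b i` is some
`u n`, which lies above both `c` and `d`. The lower part of a fan is an antichain. Below `c` or
`a j` it is a single `a i`, which `v i` tops; the only other incomparable maxima are `v l`, `u n`
with `n ≤ l`, and a fan below `v l` parallel to `u n` has lower part a single `v k`, topped by
`u (k + 1)`.

In any partial order, if parallel bouquets `B₀, B₁` are not skewly topped, then sending `p` to its
down-set with `max B₁` renamed to `max B₀` is a parsimonious representation, since an element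
above `max B₁` and `B₀ − {max B₀}` lies above `max B₀`; its `α` identifies the two maxima.
-/

section Fans

variable {le : P → P → Prop} {F F₀ F₁ B₀ B₁ : Set P} {m m₀ m₁ : P}

theorem ParallelR.symm (h : ParallelR le B₀ B₁) : ParallelR le B₁ B₀ :=
  fun b₁ hb₁ b₀ hb₀ => (h b₀ hb₀ b₁ hb₁).symm

theorem SkewlyToppedR.symm (h : SkewlyToppedR le B₀ B₁ m₀ m₁) :
    SkewlyToppedR le B₁ B₀ m₁ m₀ :=
  h.imp fun _ => Or.symm

theorem IsFanR.subsingleton_sdiff_of_isChain {C : Set P} (hF : IsFanR le F m)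
    (hC : IsChain le C) (hFC : F \ {m} ⊆ C) : (F \ {m}).Subsingleton := by
  intro x hx y hy
  by_contra hxy
  rcases hC (hFC hx) (hFC hy) hxy with h | h
  · exact hxy (hF.2 x hx y hy h)
  · exact hxy (hF.2 y hy x hx h).symm

theorem skewlyToppedR_of_isChain {C : Set P} {x t : P} (hF : IsFanR le F₁ m₁)
    (hC : IsChain le C) (hFC : F₁ \ {m₁} ⊆ C) (hx : x ∈ F₁ \ {m₁}) (hm₀ : le m₀ t)
    (hm₁ : ¬ le m₁ t) (hxt : le x t) : SkewlyToppedR le F₀ F₁ m₀ m₁ :=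
  ⟨t, Or.inl ⟨hm₀, hm₁, fun _ hy => hF.subsingleton_sdiff_of_isChain hC hFC hx hy ▸ hxt⟩⟩

end Fans

theorem rlt_iff_lt [PartialOrder P] {a b : P} : rlt (· ≤ ·) a b ↔ a < b :=
  lt_iff_le_not_ge.symm

theorem ParallelR.notMem_of_mem [Preorder P] {B₀ B₁ : Set P} (h : ParallelR (· ≤ ·) B₀ B₁)
    {b : P} (hb : b ∈ B₀) : b ∉ B₁ :=
  fun hb' => (h b hb b hb').1 le_rfl

theorem IsBouquetR.lt_of_mem_sdiff [PartialOrder P] {B : Set P} {m x : P}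
    (hB : IsBouquetR (· ≤ ·) B m) (hx : x ∈ B \ {m}) : x < m :=
  (hB.2.2 x hx.1).lt_of_ne hx.2

section Collapse

open Function Set

theorem update_id_eq_update_id_iff [DecidableEq P] {m₀ m₁ x y : P} :
    update id m₁ m₀ x = update id m₁ m₀ y ↔
      x = y ∨ (x = m₀ ∧ y = m₁) ∨ (x = m₁ ∧ y = m₀) := by
  simp only [update_apply, id_eq]
  split_ifs <;> grind

variable [PartialOrder P] [DecidableEq P] {B₀ B₁ : Set P} {m₀ m₁ : P}

def collapsedRep (m₀ m₁ p : P) : Set P := update id m₁ m₀ '' Iic p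

theorem mem_collapsedRep_iff_of_ne {b p : P} (h₀ : b ≠ m₀) (h₁ : b ≠ m₁) :
    b ∈ collapsedRep m₀ m₁ p ↔ b ≤ p := by
  refine ⟨?_, fun hb => ⟨b, hb, update_of_ne h₁ _ _⟩⟩
  rintro ⟨z, hz, hzb⟩
  have hb : update id m₁ m₀ b = b := update_of_ne h₁ _ _
  rw [← hb, update_id_eq_update_id_iff] at hzb
  rcases hzb with rfl | ⟨-, rfl⟩ | ⟨-, rfl⟩
  exacts [hz, absurd rfl h₁, absurd rfl h₀]

theorem forall_sdiff_le_of_collapsedRep_subset {B : Set P} {m p : P} (hB : ∀ b ∈ B, b ≤ m)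
    (hm₀ : m₀ ∉ B \ {m}) (hm₁ : m₁ ∉ B \ {m})
    (h : collapsedRep m₀ m₁ m ⊆ collapsedRep m₀ m₁ p) : ∀ b ∈ B \ {m}, b ≤ p := by
  intro b hb
  have h₀ : b ≠ m₀ := by rintro rfl; exact hm₀ hb
  have h₁ : b ≠ m₁ := by rintro rfl; exact hm₁ hb
  rw [← mem_collapsedRep_iff_of_ne h₀ h₁]
  exact h ((mem_collapsedRep_iff_of_ne h₀ h₁).2 (hB b hb.1))

/-- Renaming `m₁` to `m₀` loses no order information exactly because no element skewly tops
the two bouquets. -/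
theorem collapsedRep_subset_iff (hB₀ : IsBouquetR (· ≤ ·) B₀ m₀)
    (hB₁ : IsBouquetR (· ≤ ·) B₁ m₁) (hpar : ParallelR (· ≤ ·) B₀ B₁)
    (hnot : ¬ SkewlyToppedR (· ≤ ·) B₀ B₁ m₀ m₁) {p p' : P} :
    collapsedRep m₀ m₁ p ⊆ collapsedRep m₀ m₁ p' ↔ p ≤ p' := by
  refine ⟨fun h => ?_, fun h => image_mono (Iic_subset_Iic.2 h)⟩
  obtain ⟨z, hz, hzp⟩ := h ⟨p, le_rfl, rfl⟩
  rcases update_id_eq_update_id_iff.1 hzp with rfl | ⟨rfl, rfl⟩ | ⟨rfl, rfl⟩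
  · exact hz
  · by_contra hm₁
    refine hnot ⟨p', Or.inl ⟨hz, hm₁, forall_sdiff_le_of_collapsedRep_subset hB₁.2.2
      (fun h => hpar.notMem_of_mem hB₀.2.1 h.1) (fun h => h.2 rfl) h⟩⟩
  · by_contra hm₀
    refine hnot ⟨p', Or.inr ⟨hz, hm₀, forall_sdiff_le_of_collapsedRep_subset hB₀.2.2
      (fun h => h.2 rfl) (fun h => hpar.symm.notMem_of_mem hB₁.2.1 h.1) h⟩⟩

theorem residR_collapsedRep (h₀₁ : ¬ m₀ ≤ m₁) (h₁₀ : ¬ m₁ ≤ m₀) (p : P) :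
    residR (· ≤ ·) (collapsedRep m₀ m₁) p = {update id m₁ m₀ p} := by
  ext q
  simp only [residR, mem_sdiff, mem_iUnion, mem_ofPred_eq, rlt_iff_lt, mem_singleton_iff,
    exists_prop, not_exists, not_and]
  constructor
  · rintro ⟨⟨z, hz, rfl⟩, hq⟩
    rcases hz.lt_or_eq with hzp | rfl
    · exact absurd ⟨z, le_rfl, rfl⟩ (hq z hzp)
    · rfl
  · rintro rfl
    refine ⟨⟨p, le_rfl, rfl⟩, fun p' hp' ⟨z, hz, hzp⟩ => ?_⟩
    rcases update_id_eq_update_id_iff.1 hzp with rfl | ⟨rfl, rfl⟩ | ⟨rfl, rfl⟩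
    exacts [hp'.not_ge hz, h₀₁ (hz.trans hp'.le), h₁₀ (hz.trans hp'.le)]

theorem isParsimoniousR_collapsedRep (hB₀ : IsBouquetR (· ≤ ·) B₀ m₀)
    (hB₁ : IsBouquetR (· ≤ ·) B₁ m₁) (hpar : ParallelR (· ≤ ·) B₀ B₁)
    (hnot : ¬ SkewlyToppedR (· ≤ ·) B₀ B₁ m₀ m₁) :
    IsParsimoniousR (· ≤ ·) (collapsedRep m₀ m₁) := by
  have hsub {p p' : P} := collapsedRep_subset_iff hB₀ hB₁ hpar hnot (p := p) (p' := p')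
  obtain ⟨h₀₁, h₁₀⟩ := hpar m₀ hB₀.2.1 m₁ hB₁.2.1
  have hresid := residR_collapsedRep h₀₁ h₁₀
  refine ⟨⟨fun p p' h => (hsub.1 h.le).antisymm (hsub.1 h.ge), fun p p' => ?_⟩,
    fun p => ⟨_, hresid p⟩, fun p q ⟨z, hz, hzq⟩ => ⟨z, hz, hzq ▸ hresid z⟩⟩
  rw [rlt_iff_lt, lt_iff_le_not_ge, ssubset_iff_subset_not_subset, hsub, hsub]

end Collapse

theorem not_isSaturatedR_of_not_skewlyToppedR [PartialOrder P] {B₀ B₁ : Set P} {m₀ m₁ : P}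
    (hB₀ : IsBouquetR (· ≤ ·) B₀ m₀) (hB₁ : IsBouquetR (· ≤ ·) B₁ m₁)
    (hpar : ParallelR (· ≤ ·) B₀ B₁) (hnot : ¬ SkewlyToppedR (· ≤ ·) B₀ B₁ m₀ m₁) :
    ¬ IsSaturatedR ((· ≤ ·) : P → P → Prop) := by
  classical
  intro hsat
  obtain ⟨h₀₁, h₁₀⟩ := hpar m₀ hB₀.2.1 m₁ hB₁.2.1
  have hinj := hsat P _ (isParsimoniousR_collapsedRep hB₀ hB₁ hpar hnot) _
    (residR_collapsedRep h₀₁ h₁₀)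
  have hm : m₀ ≠ m₁ := fun h => h₀₁ h.le
  exact hm (hinj (by simp [hm]))

inductive FanPoset where
  | a : ℕ → FanPoset
  | b : ℕ → FanPoset
  | c : FanPoset
  | d : FanPoset
  | v : ℕ → FanPoset
  | u : ℕ → FanPoset
  deriving Countable

namespace FanPoset

open Set

protected def le : FanPoset → FanPoset → Prop
  | a i, a j => i ≤ j
  | a _, c => True
  | a i, v m => i ≤ m
  | a _, u _ => True
  | b i, b j => i ≤ j
  | b _, d => True
  | b _, v _ => True
  | b _, u _ => True
  | c, c => True
  | c, u _ => True
  | d, d => True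
  | d, v _ => True
  | d, u _ => True
  | v m, v m' => m ≤ m'
  | v m, u n => m < n
  | u n, u n' => n ≤ n'
  | _, _ => False

instance : PartialOrder FanPoset where
  le := FanPoset.le
  le_refl x := by cases x <;> simp [FanPoset.le]
  le_trans x y z := by cases x <;> cases y <;> cases z <;> simp [FanPoset.le] <;> omega
  le_antisymm x y := by cases x <;> cases y <;> simp [FanPoset.le] <;> omega

theorem le_def {x y : FanPoset} : x ≤ y ↔ FanPoset.le x y := Iff.rfl

theorem monotone_a : Monotone a := fun _ _ h => h

theorem monotone_v : Monotone v := fun _ _ h => h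

theorem mem_range_a_of_lt_of_le_c {x y : FanPoset} (hxy : x < y) (hy : y ≤ c) :
    x ∈ range a := by
  rw [lt_iff_le_not_ge] at hxy
  cases x <;> cases y <;> simp_all [le_def, FanPoset.le]

theorem le_v_of_not_a_le {i : ℕ} {y : FanPoset} (h : ¬ a i ≤ y) : y ≤ v i := by
  cases y <;> simp_all [le_def, FanPoset.le] <;> omega

theorem not_le_v_of_a_lt_of_le_c {i : ℕ} {y : FanPoset} (hy : a i < y) (hyc : y ≤ c) :
    ¬ y ≤ v i := by
  rw [lt_iff_le_not_ge] at hy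
  cases y <;> simp_all [le_def, FanPoset.le]

theorem exists_eq_v_of_le_v_of_not_le_u {l n : ℕ} {y : FanPoset} (hy : y ≤ v l)
    (hyu : ¬ y ≤ u n) : ∃ k, n ≤ k ∧ y = v k := by
  cases y <;> simp_all [le_def, FanPoset.le]

theorem le_c_or_le_c_or_u_v_of_incomparable {x y : FanPoset} (hxy : ¬ x ≤ y)
    (hyx : ¬ y ≤ x) :
    x ≤ c ∨ y ≤ c ∨ (∃ n l, x = u n ∧ y = v l) ∨ (∃ n l, x = v l ∧ y = u n) := by
  cases x <;> cases y <;> simp_all [le_def, FanPoset.le] <;> omega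

theorem c_le_of_d_le {t : FanPoset} (hd : d ≤ t) (ha : ∀ i, a i ≤ t) : c ≤ t := by
  cases t with
  | v m => exact absurd (ha (m + 1)) (by simp [le_def, FanPoset.le])
  | _ => simp_all [le_def, FanPoset.le]

theorem d_le_of_c_le {t : FanPoset} (hc : c ≤ t) (hb : b 0 ≤ t) : d ≤ t := by
  cases t <;> simp_all [le_def, FanPoset.le]

variable {F₀ F₁ : Set FanPoset} {m₀ m₁ : FanPoset}

theorem skewlyToppedR_of_le_c (hF₁ : IsFanR (· ≤ ·) F₁ m₁) (hm₀ : m₀ ∈ F₀)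
    (hpar : ParallelR (· ≤ ·) F₀ F₁) (hm₁ : m₁ ≤ c) : SkewlyToppedR (· ≤ ·) F₀ F₁ m₀ m₁ := by
  have hsub : F₁ \ {m₁} ⊆ range a := fun x hx =>
    mem_range_a_of_lt_of_le_c (hF₁.1.lt_of_mem_sdiff hx) hm₁
  obtain ⟨x, hxF, hxm⟩ := hF₁.1.1.exists_ne m₁
  have hx : x ∈ F₁ \ {m₁} := ⟨hxF, hxm⟩
  obtain ⟨i, rfl⟩ := hsub hx
  exact skewlyToppedR_of_isChain hF₁ monotone_a.isChain_range hsub hx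
    (le_v_of_not_a_le (hpar m₀ hm₀ _ hxF).2)
    (not_le_v_of_a_lt_of_le_c (hF₁.1.lt_of_mem_sdiff hx) hm₁) (monotone_a le_rfl)

theorem skewlyToppedR_u_v {n l : ℕ} (hF₁ : IsFanR (· ≤ ·) F₁ (v l)) (hm₀ : u n ∈ F₀)
    (hpar : ParallelR (· ≤ ·) F₀ F₁) : SkewlyToppedR (· ≤ ·) F₀ F₁ (u n) (v l) := by
  have hv {y} (hy : y ∈ F₁ \ {v l}) : ∃ k, n ≤ k ∧ y = v k :=
    exists_eq_v_of_le_v_of_not_le_u (hF₁.1.2.2 y hy.1) (hpar _ hm₀ y hy.1).2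
  have hsub : F₁ \ {v l} ⊆ range v := fun y hy =>
    let ⟨k, _, hk⟩ := hv hy; ⟨k, hk.symm⟩
  obtain ⟨x, hxF, hxm⟩ := hF₁.1.1.exists_ne (v l)
  have hx : x ∈ F₁ \ {v l} := ⟨hxF, hxm⟩
  obtain ⟨k, hnk, rfl⟩ := hv hx
  have hkl : k < l := lt_of_le_of_ne (hF₁.1.2.2 _ hxF) (by simpa using hxm)
  refine skewlyToppedR_of_isChain hF₁ monotone_v.isChain_range hsub hx (t := u (k + 1))
    ?_ ?_ ?_
  all_goals simp only [le_def, FanPoset.le]; omega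

theorem skewlyToppedR_of_isFanR (h₀ : IsFanR (· ≤ ·) F₀ m₀) (h₁ : IsFanR (· ≤ ·) F₁ m₁)
    (hpar : ParallelR (· ≤ ·) F₀ F₁) : SkewlyToppedR (· ≤ ·) F₀ F₁ m₀ m₁ := by
  obtain ⟨h₀₁, h₁₀⟩ := hpar m₀ h₀.1.2.1 m₁ h₁.1.2.1
  rcases le_c_or_le_c_or_u_v_of_incomparable h₀₁ h₁₀ with hm₀ | hm₁ | ⟨n, l, rfl, rfl⟩ |
    ⟨n, l, rfl, rfl⟩
  · exact (skewlyToppedR_of_le_c h₀ h₁.1.2.1 hpar.symm hm₀).symm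
  · exact skewlyToppedR_of_le_c h₁ h₀.1.2.1 hpar hm₁
  · exact skewlyToppedR_u_v h₁ h₀.1.2.1 hpar
  · exact (skewlyToppedR_u_v h₀ h₁.1.2.1 hpar.symm).symm

theorem isBouquetR_insert_c : IsBouquetR (· ≤ ·) (insert c (range a)) c :=
  ⟨⟨c, mem_insert _ _, a 0, mem_insert_of_mem _ ⟨0, rfl⟩, nofun⟩, mem_insert _ _,
    by rintro _ (rfl | ⟨i, rfl⟩) <;> simp [le_def, FanPoset.le]⟩

theorem isBouquetR_insert_d : IsBouquetR (· ≤ ·) (insert d (range b)) d :=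
  ⟨⟨d, mem_insert _ _, b 0, mem_insert_of_mem _ ⟨0, rfl⟩, nofun⟩, mem_insert _ _,
    by rintro _ (rfl | ⟨i, rfl⟩) <;> simp [le_def, FanPoset.le]⟩

theorem parallelR_insert_c_insert_d : ParallelR (· ≤ ·) (insert c (range a))
    (insert d (range b)) := by
  rintro _ (rfl | ⟨i, rfl⟩) _ (rfl | ⟨j, rfl⟩) <;> simp [le_def, FanPoset.le]

theorem not_skewlyToppedR_insert_c_insert_d :
    ¬ SkewlyToppedR (· ≤ ·) (insert c (range a)) (insert d (range b)) c d := by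
  rintro ⟨t, ⟨hc, hd, hb⟩ | ⟨hd, hc, ha⟩⟩
  · exact hd (d_le_of_c_le hc (hb (b 0) ⟨mem_insert_of_mem _ ⟨0, rfl⟩, nofun⟩))
  · exact hc (c_le_of_d_le hd fun i => ha (a i) ⟨mem_insert_of_mem _ ⟨i, rfl⟩, nofun⟩)

end FanPoset

/-- There is a countable partial order in which every two parallel fans are
skewly topped but which contains two parallel bouquets that are not skewly topped; in
particular it is not saturated. -/
theorem exists_countable_fans_topped_not_bouquets_topped :
    ∃ (P : Type) (le : P → P → Prop), Countable P ∧ IsPartialOrder P le ∧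
      (∀ (F₀ F₁ : Set P) (m₀ m₁ : P), IsFanR le F₀ m₀ → IsFanR le F₁ m₁ →
        ParallelR le F₀ F₁ → SkewlyToppedR le F₀ F₁ m₀ m₁) ∧
      (∃ (B₀ B₁ : Set P) (m₀ m₁ : P), IsBouquetR le B₀ m₀ ∧ IsBouquetR le B₁ m₁ ∧
        ParallelR le B₀ B₁ ∧ ¬ SkewlyToppedR le B₀ B₁ m₀ m₁) ∧
      ¬ IsSaturatedR le :=
  ⟨FanPoset, (· ≤ ·), inferInstance, inferInstance,
    fun _ _ _ _ => FanPoset.skewlyToppedR_of_isFanR,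
    ⟨_, _, _, _, FanPoset.isBouquetR_insert_c, FanPoset.isBouquetR_insert_d,
      FanPoset.parallelR_insert_c_insert_d, FanPoset.not_skewlyToppedR_insert_c_insert_d⟩,
    not_isSaturatedR_of_not_skewlyToppedR FanPoset.isBouquetR_insert_c
      FanPoset.isBouquetR_insert_d FanPoset.parallelR_insert_c_insert_d
      FanPoset.not_skewlyToppedR_insert_c_insert_d⟩

end SatOrder
end

section
/- A partial order P = (P, ≤_P) is an interval order if and only if it does not contain a suborder of type 2 ⊕ 2, i.e., if and only if for all p₀, p₁, p₂, p₃ ∈ P, whenever p₀ <_P p₁ and p₂ <_P p₃, it holds that p₀ ≤_P p₃ or p₂ ≤_P p₁. -/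
/-!
If `P` has no `2 ⊕ 2`, the strict down-sets `Iio p` are totally ordered by inclusion, and hence
so are all intersections of them. Sending `p` to the pair `Iio p ⊂ ⋂_{q > p} Iio q` of this
chain gives `p < p' ↔ ⋂_{q > p} Iio q ⊆ Iio p'`; replacing every point of the chain by a copy
of `ℚ` makes it dense, so each pair bounds a nonempty open interval. Conversely, a `2 ⊕ 2`
inside an interval representation yields points `a < b ≤ c < d ≤ a`.
-/

namespace SatOrder

variable {α Q : Type}

/-- An interval order: a partial order admitting an interval representation, i.e. a map
assigning to each `p` a nonempty bounded open interval `(lo p, hi p)` (with `lo p < hi p`)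
of some linear order `L`, such that `p < p'` iff every element of the interval of `p` is
below every element of the interval of `p'`. -/
def IsIntervalOrder (α : Type) [PartialOrder α] : Prop :=
  ∃ (L : Type) (_ : LinearOrder L) (lo hi : α → L),
    (∀ p : α, lo p < hi p ∧ (Set.Ioo (lo p) (hi p)).Nonempty) ∧
    ∀ p p' : α, p < p' ↔
      ∀ ℓ ∈ Set.Ioo (lo p) (hi p), ∀ ℓ' ∈ Set.Ioo (lo p') (hi p'), ℓ < ℓ'


open Set

theorem forall_mem_Ioo_lt_iff {L : Type*} [LinearOrder L] [DenselyOrdered L] {a b c d : L}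
    (hab : a < b) (hcd : c < d) : (∀ x ∈ Ioo a b, ∀ y ∈ Ioo c d, x < y) ↔ b ≤ c := by
  refine ⟨fun h => ?_, fun hbc x hx y hy => hx.2.trans_le (hbc.trans hy.1.le)⟩
  by_contra! hcb
  obtain ⟨x, hx, hxb⟩ := exists_between (max_lt hab hcb)
  have hxab : x ∈ Ioo a b := ⟨(le_max_left a c).trans_lt hx, hxb⟩
  obtain ⟨y, hcy, hy⟩ := exists_between (lt_min ((le_max_right a c).trans_lt hx) hcd)
  have hycd : y ∈ Ioo c d := ⟨hcy, hy.trans_le (min_le_right x d)⟩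
  exact (h x hxab y hycd).not_gt (hy.trans_le (min_le_left x d))

theorem IsIntervalOrder.le_or_le_of_lt_of_lt [PartialOrder α] (h : IsIntervalOrder α)
    {p₀ p₁ p₂ p₃ : α} (h₀₁ : p₀ < p₁) (h₂₃ : p₂ < p₃) : p₀ ≤ p₃ ∨ p₂ ≤ p₁ := by
  obtain ⟨L, _, lo, hi, -, hrep⟩ := h
  by_contra! hc
  have h₀₃ : ¬ p₀ < p₃ := fun h => hc.1 h.le
  have h₂₁ : ¬ p₂ < p₁ := fun h => hc.2 h.le
  rw [hrep] at h₀₃ h₂₁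
  push Not at h₀₃ h₂₁
  obtain ⟨a, ha, d, hd, hda⟩ := h₀₃
  obtain ⟨c, hc, b, hb, hbc⟩ := h₂₁
  exact lt_irrefl a (calc
    a < b := (hrep p₀ p₁).1 h₀₁ a ha b hb
    _ ≤ c := hbc
    _ < d := (hrep p₂ p₃).1 h₂₃ c hc d hd
    _ ≤ a := hda)

theorem isIntervalOrder_of_lt_iff_le [PartialOrder α] {K : Type} [LinearOrder K] (lo hi : α → K)
    (hlt : ∀ p, lo p < hi p) (hrep : ∀ p p', p < p' ↔ hi p ≤ lo p') : IsIntervalOrder α := by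
  let e : K → K ×ₗ ℚ := fun k => toLex (k, 0)
  have he : StrictMono e := fun a b h => Prod.Lex.toLex_lt_toLex.2 (Or.inl h)
  refine ⟨K ×ₗ ℚ, inferInstance, e ∘ lo, e ∘ hi, fun p => ⟨he (hlt p), nonempty_Ioo.2 (he (hlt p))⟩,
    fun p p' => ?_⟩
  simp only [Function.comp_apply]
  rw [forall_mem_Ioo_lt_iff (he (hlt p)) (he (hlt p')), he.le_iff_le, hrep]

theorem IsChain.image_sInter_powerset {β : Type*} {𝓕 : Set (Set β)} (h : IsChain (· ⊆ ·) 𝓕) :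
    IsChain (· ⊆ ·) (sInter '' 𝒫 𝓕) := by
  rintro _ ⟨𝒜, h𝒜, rfl⟩ _ ⟨ℬ, hℬ, rfl⟩ -
  by_contra! hne
  obtain ⟨b, hb, hAb⟩ : ∃ b ∈ ℬ, ¬ ⋂₀ 𝒜 ⊆ b := by simpa [subset_sInter_iff] using hne.1
  -- every member of `𝒜` contains a point outside `b`, hence contains `b`
  have hbA : b ⊆ ⋂₀ 𝒜 := subset_sInter fun a ha =>
    (h.total (h𝒜 ha) (hℬ hb)).resolve_left fun hab => hAb ((sInter_subset_of_mem ha).trans hab)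
  exact hne.2 ((sInter_subset_of_mem hb).trans hbA)

theorem isChain_range_Iio [PartialOrder α]
    (H : ∀ p₀ p₁ p₂ p₃ : α, p₀ < p₁ → p₂ < p₃ → p₀ ≤ p₃ ∨ p₂ ≤ p₁) :
    IsChain (· ⊆ ·) (range (Iio : α → Set α)) := by
  rintro _ ⟨p, rfl⟩ _ ⟨q, rfl⟩ -
  by_contra! hne
  obtain ⟨x, hxp, hxq⟩ := not_subset.1 hne.1
  obtain ⟨y, hyq, hyp⟩ := not_subset.1 hne.2
  rcases H x p y q hxp hyq with hxq' | hyp'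
  · obtain rfl := hxq'.eq_of_not_lt hxq
    exact hyp (hyq.trans hxp)
  · obtain rfl := hyp'.eq_of_not_lt hyp
    exact hxq (hxp.trans hyq)

theorem Iio_ssubset_sInter_image_Iio_Ioi [PartialOrder α] (p : α) :
    Iio p ⊂ ⋂₀ (Iio '' Ioi p) :=
  ssubset_of_subset_not_subset (fun _ hx => by simpa using fun _ => hx.trans)
    fun h => lt_irrefl p (h (by simp))

theorem sInter_image_Iio_Ioi_subset_Iio_iff [PartialOrder α] {p q : α} :
    ⋂₀ (Iio '' Ioi p) ⊆ Iio q ↔ p < q :=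
  ⟨fun h => h (by simp), fun h => sInter_subset_of_mem (mem_image_of_mem _ h)⟩

/-- A partial order is an interval order iff it contains no suborder of type
`2 ⊕ 2`. -/
theorem intervalOrder_iff_no_two_plus_two {α : Type} [PartialOrder α] :
    IsIntervalOrder α ↔
      ∀ p₀ p₁ p₂ p₃ : α, p₀ < p₁ → p₂ < p₃ → p₀ ≤ p₃ ∨ p₂ ≤ p₁ := by
  refine ⟨fun h _ _ _ _ => h.le_or_le_of_lt_of_lt, fun H => ?_⟩
  classical
  have hC := IsChain.image_sInter_powerset (isChain_range_Iio H)
  let _ : LinearOrder (sInter '' 𝒫 range (Iio : α → Set α)) := hC.linearOrder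
  exact isIntervalOrder_of_lt_iff_le (K := sInter '' 𝒫 range (Iio : α → Set α))
    (fun p => ⟨Iio p, {Iio p}, by simp, sInter_singleton _⟩)
    (fun p => ⟨⋂₀ (Iio '' Ioi p), Iio '' Ioi p, image_subset_range _ _, rfl⟩)
    (fun p => Subtype.mk_lt_mk.2 (Iio_ssubset_sInter_image_Iio_Ioi p))
    (fun _ _ => sInter_image_Iio_Ioi_subset_Iio_iff.symm)

end SatOrder
end

section
/- Let f : ℕ → ℕ be injective. Define a relation ≤_P on P = ℕ × ℕ (writing p_{i,s} for the pair (i,s)) as follows: for all i < j in ℕ, p_{i,s} >_P p_{j,t} for all s, t ∈ ℕ; and for each i and all s < t in ℕ, p_{i,s} <_P p_{i,t} if s > 0, t ≥ 2, and f(t−2) = i, while p_{i,s} >_P p_{i,t} otherwise. Then ≤_P is a linear order on P in which every element has an immediate ≤_P-predecessor, and for every i ∈ ℕ, i is in the range of f if and only if the immediate ≤_P-predecessor of p_{i,0} is not p_{i,1}. -/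
/-!
Call `c = k + 2` the special column of row `i = f k` (unique, as `f` is injective). Read downwards
in `<_P`, row `i` is `p_{i,0}, p_{i,c}, p_{i,1}, …, p_{i,c-1}, p_{i,c+1}, …`, or just
`p_{i,0}, p_{i,1}, …` when `i ∉ range f`. Recording each point by its row and its position in
this list identifies `<_P` with the reverse lexicographic order on `ℕ ×ₗ ℕ`, whose covering pairs
are `(i, n) ⋖ (i, n + 1)`. Hence every point has an immediate predecessor, and that of `p_{i,0}`
is `p_{i,c}` or `p_{i,1}` according as `i ∈ range f` or not.
-/

namespace SatOrder

variable {α Q : Type}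

/-- `p_{i,s} <_P p_{i,t}` (for `s < t` in the same row `i`) holds exactly when
`s > 0`, `t ≥ 2` and `f (t-2) = i`. -/
def rowlt (f : ℕ → ℕ) (i s t : ℕ) : Prop := 0 < s ∧ 2 ≤ t ∧ f (t - 2) = i

/-- The strict order `<_P` on `P = ℕ × ℕ` built from an injection `f : ℕ → ℕ`:
for `i < j`, `p_{i,s} >_P p_{j,t}` for all `s, t`; and for `s < t` in row `i`,
`p_{i,s} <_P p_{i,t}` if `s > 0`, `t ≥ 2` and `f(t-2) = i`, while `p_{i,s} >_P p_{i,t}`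
otherwise. -/
def plt (f : ℕ → ℕ) (p q : ℕ × ℕ) : Prop :=
  q.1 < p.1 ∨
    (p.1 = q.1 ∧ ((p.2 < q.2 ∧ rowlt f p.1 p.2 q.2) ∨ (q.2 < p.2 ∧ ¬ rowlt f p.1 q.2 p.2)))

/-- The order `≤_P` on `P = ℕ × ℕ` built from `f`. -/
def ple (f : ℕ → ℕ) (p q : ℕ × ℕ) : Prop := plt f p q ∨ p = q

/-- `q` is the immediate `≤_P`-predecessor of `p`. -/
def ImmPred (f : ℕ → ℕ) (q p : ℕ × ℕ) : Prop :=
  plt f q p ∧ ¬ ∃ r : ℕ × ℕ, plt f q r ∧ plt f r p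

def moveToOne (c s : ℕ) : ℕ :=
  if s = 0 then 0 else if s = c then 1 else if s < c then s + 1 else s

lemma moveToOne_zero (c : ℕ) : moveToOne c 0 = 0 := rfl

lemma moveToOne_one_eq_one_iff (c : ℕ) : moveToOne c 1 = 1 ↔ c < 2 := by
  unfold moveToOne; grind

lemma moveToOne_injective (c : ℕ) : Function.Injective (moveToOne c) := by
  intro s t h; unfold moveToOne at h; grind

lemma moveToOne_surjective (c : ℕ) : Function.Surjective (moveToOne c) := by
  intro n
  refine ⟨if n = 0 then 0 else if n = 1 then (if 2 ≤ c then c else 1)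
    else if n ≤ c then n - 1 else n, ?_⟩
  unfold moveToOne; grind

lemma moveToOne_lt_moveToOne_iff (c s t : ℕ) :
    moveToOne c t < moveToOne c s ↔
      (s < t ∧ 0 < s ∧ 2 ≤ t ∧ t = c) ∨ (t < s ∧ ¬(0 < t ∧ 2 ≤ s ∧ s = c)) := by
  unfold moveToOne; grind

noncomputable def moveToOneEquiv (c : ℕ) : ℕ ≃ ℕ :=
  Equiv.ofBijective (moveToOne c) ⟨moveToOne_injective c, moveToOne_surjective c⟩

open Classical in
/-- The junk value `0` for `i ∉ range f` makes `moveToOne (specialCol f i)` the identity. -/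
noncomputable def specialCol (f : ℕ → ℕ) (i : ℕ) : ℕ :=
  if h : ∃ k, f k = i then h.choose + 2 else 0

lemma two_le_specialCol_iff (f : ℕ → ℕ) (i : ℕ) : 2 ≤ specialCol f i ↔ i ∈ Set.range f := by
  unfold specialCol; split_ifs with h <;> simp [h]

lemma rowlt_iff {f : ℕ → ℕ} (hf : Function.Injective f) (i s t : ℕ) :
    rowlt f i s t ↔ 0 < s ∧ 2 ≤ t ∧ t = specialCol f i := by
  unfold rowlt specialCol
  split_ifs with h
  · have hk : f (h.choose + 2 - 2) = i := by simpa using h.choose_spec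
    constructor
    · rintro ⟨hs, ht, hft⟩
      have := hf (hft.trans hk.symm)
      omega
    · rintro ⟨hs, ht, rfl⟩
      exact ⟨hs, ht, hk⟩
  · push Not at h
    simp only [h, and_false, false_iff, not_and]
    omega

noncomputable def rankLex (f : ℕ → ℕ) : ℕ × ℕ ≃ ℕ ×ₗ ℕ :=
  (Equiv.prodShear (Equiv.refl ℕ) fun i => moveToOneEquiv (specialCol f i)).trans toLex

lemma rankLex_apply (f : ℕ → ℕ) (p : ℕ × ℕ) :
    rankLex f p = toLex (p.1, moveToOne (specialCol f p.1) p.2) := rfl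

lemma plt_iff_rankLex_lt {f : ℕ → ℕ} (hf : Function.Injective f) (p q : ℕ × ℕ) :
    plt f p q ↔ rankLex f q < rankLex f p := by
  obtain ⟨i, s⟩ := p
  obtain ⟨j, t⟩ := q
  simp only [plt, rankLex_apply, Prod.Lex.toLex_lt_toLex, rowlt_iff hf]
  refine or_congr Iff.rfl ⟨?_, ?_⟩ <;> rintro ⟨rfl, h⟩
  · exact ⟨rfl, (moveToOne_lt_moveToOne_iff _ s t).mpr h⟩
  · exact ⟨rfl, (moveToOne_lt_moveToOne_iff _ s t).mp h⟩

lemma ple_iff_rankLex_le {f : ℕ → ℕ} (hf : Function.Injective f) (p q : ℕ × ℕ) :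
    ple f p q ↔ rankLex f q ≤ rankLex f p := by
  rw [ple, plt_iff_rankLex_lt hf, le_iff_lt_or_eq, (rankLex f).injective.eq_iff, eq_comm]

lemma immPred_iff_rankLex_covBy {f : ℕ → ℕ} (hf : Function.Injective f) (q p : ℕ × ℕ) :
    ImmPred f q p ↔ rankLex f p ⋖ rankLex f q := by
  simp only [ImmPred, CovBy, plt_iff_rankLex_lt hf, (rankLex f).surjective.forall, not_exists,
    not_and]
  exact and_congr_right fun _ => forall_congr' fun _ => imp_not_comm

lemma toLex_covBy_toLex_iff_nat {i j s t : ℕ} :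
    toLex (i, s) ⋖ toLex (j, t) ↔ i = j ∧ t = s + 1 := by
  simp [Prod.Lex.toLex_covBy_toLex_iff, Order.covBy_iff_add_one_eq, eq_comm]

lemma lex_nat_exists_covBy (a : ℕ ×ₗ ℕ) : ∃ b, a ⋖ b :=
  ⟨toLex ((ofLex a).1, (ofLex a).2 + 1), toLex_covBy_toLex_iff_nat.mpr ⟨rfl, rfl⟩⟩

/-- For injective `f : ℕ → ℕ`, the relation `≤_P` on `ℕ × ℕ` is a linear
order in which every element has an immediate predecessor, and `i` is in the range of `f`
iff the immediate predecessor of `p_{i,0}` is not `p_{i,1}`. -/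
theorem ple_linearOrder_immPred (f : ℕ → ℕ) (hf : Function.Injective f) :
    IsLinearOrder (ℕ × ℕ) (ple f) ∧
      (∀ p : ℕ × ℕ, ∃ q : ℕ × ℕ, ImmPred f q p) ∧
      (∀ i : ℕ, i ∈ Set.range f ↔ ¬ ImmPred f (i, 1) (i, 0)) := by
  refine ⟨?_, fun p => ?_, fun i => ?_⟩
  · let e : ple f ↪r (· ≥ ·) := ⟨(rankLex f).toEmbedding, (ple_iff_rankLex_le hf _ _).symm⟩
    exact e.isLinearOrder
  · obtain ⟨b, hb⟩ := lex_nat_exists_covBy (rankLex f p)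
    exact ⟨(rankLex f).symm b, by rwa [immPred_iff_rankLex_covBy hf, Equiv.apply_symm_apply]⟩
  · rw [immPred_iff_rankLex_covBy hf, rankLex_apply, rankLex_apply, toLex_covBy_toLex_iff_nat,
      moveToOne_zero, ← two_le_specialCol_iff]
    simp only [true_and, zero_add, moveToOne_one_eq_one_iff, not_lt]

end SatOrder
end

section
/- Let f : ℕ → ℕ be injective, and let ≤_P be the linear order on P = ℕ × ℕ defined by: for all i < j in ℕ, p_{i,s} >_P p_{j,t} for all s, t ∈ ℕ; and for each i and all s < t in ℕ, p_{i,s} <_P p_{i,t} if s > 0, t ≥ 2, and f(t−2) = i, while p_{i,s} >_P p_{i,t} otherwise (where p_{i,s} denotes the pair (i,s)). Define φ : P → 𝒫(P) by φ(p) = {p' ∈ P : p' <_P p and p' ≠ p_{i,0} for all i ∈ ℕ}. Then φ is a parsimonious set representation of (P, ≤_P), and α_φ(p) is the immediate ≤_P-predecessor of p for every p ∈ P. -/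
/-!
Under `<_P` the rows `{i} × ℕ` are stacked with row `0` on top, and each row is an ω-chain
descending from `p_{i,0}`: next comes `p_{i,t}` for the index `t ≥ 2` with `f (t - 2) = i` (if
there is one), then the remaining `p_{i,s}` in increasing order of `s`. So `<_P` is a strict total
order in which every `p` has an immediate predecessor inside its row, never a row top `p_{i,0}`,
and every element other than a row top has an immediate successor.

For any strict total order and any class of "good" elements with these two properties,
`φ p = {x < p | x good}` is parsimonious: the sets `φ p'` with `p' < p` cover all of `φ p` except
the immediate predecessor of `p`, which is therefore the residual element of `φ` at `p`.
-/

namespace SatOrder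

variable {α Q : Type}

variable {P : Type}

section OrderRepresentation

variable (lt : P → P → Prop)

def RelCovBy (q p : P) : Prop := lt q p ∧ ¬ ∃ r, lt q r ∧ lt r p

def goodBelow (good : P → Prop) (p : P) : Set P := {x | lt x p ∧ good x}

variable {lt}

theorem rlt_or_eq_iff [IsStrictOrder P lt] {a b : P} :
    rlt (fun x y => lt x y ∨ x = y) a b ↔ lt a b := by
  refine ⟨fun ⟨hab, hba⟩ => hab.resolve_right fun h => hba (.inr h.symm),
    fun h => ⟨.inl h, ?_⟩⟩
  rintro (hba | rfl)
  exacts [asymm h hba, irrefl _ h]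

variable {good : P → Prop}

theorem goodBelow_mono [IsTrans P lt] {p p' : P} (h : lt p p') :
    goodBelow lt good p ⊆ goodBelow lt good p' :=
  fun _ ⟨hx, hg⟩ => ⟨_root_.trans hx h, hg⟩

variable [IsStrictTotalOrder P lt]

theorem residR_goodBelow_of_relCovBy {p q : P} (hq : RelCovBy lt q p) (hg : good q) :
    residR (fun x y => lt x y ∨ x = y) (goodBelow lt good) p = {q} := by
  ext x
  simp only [residR, Set.mem_sdiff, Set.mem_iUnion, Set.mem_singleton_iff, not_exists]
  constructor
  · rintro ⟨⟨hxp, hgx⟩, hx⟩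
    rcases trichotomous_of lt x q with hxq | rfl | hqx
    · exact (hx q (rlt_or_eq_iff.2 hq.1) ⟨hxq, hgx⟩).elim
    · rfl
    · exact (hq.2 ⟨x, hqx, hxp⟩).elim
  · rintro rfl
    exact ⟨⟨hq.1, hg⟩, fun p' hp' hxp' => hq.2 ⟨p', hxp'.1, rlt_or_eq_iff.1 hp'⟩⟩

theorem goodBelow_ssubset_iff (hpred : ∀ p, ∃ q, good q ∧ RelCovBy lt q p) {p p' : P} :
    goodBelow lt good p ⊂ goodBelow lt good p' ↔ lt p p' := by
  refine ⟨fun h => ?_, fun h => ?_⟩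
  · rcases trichotomous_of lt p p' with hpp' | rfl | hp'p
    · exact hpp'
    · exact (ssubset_irrefl _ h).elim
    · exact (h.not_subset (goodBelow_mono hp'p)).elim
  · obtain ⟨q, hg, hq⟩ := hpred p'
    refine ssubset_of_subset_not_subset (goodBelow_mono h) fun hsub => ?_
    exact hq.2 ⟨p, (hsub ⟨hq.1, hg⟩).1, h⟩

theorem goodBelow_injective (hpred : ∀ p, ∃ q, good q ∧ RelCovBy lt q p) :
    Function.Injective (goodBelow lt good) := by
  intro p p' h
  rcases trichotomous_of lt p p' with hpp' | rfl | hp'p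
  · exact ((goodBelow_ssubset_iff hpred).2 hpp').ne h |>.elim
  · rfl
  · exact ((goodBelow_ssubset_iff hpred).2 hp'p).ne h.symm |>.elim

theorem relCovBy_of_residR_goodBelow (hpred : ∀ p, ∃ q, good q ∧ RelCovBy lt q p) {p q : P}
    (h : residR (fun x y => lt x y ∨ x = y) (goodBelow lt good) p = {q}) : RelCovBy lt q p := by
  obtain ⟨q', hg, hq'⟩ := hpred p
  rw [residR_goodBelow_of_relCovBy hq' hg, Set.singleton_eq_singleton_iff] at h
  exact h ▸ hq'

theorem isParsimoniousR_goodBelow (hpred : ∀ p, ∃ q, good q ∧ RelCovBy lt q p)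
    (hsucc : ∀ q, good q → ∃ p, RelCovBy lt q p) :
    IsParsimoniousR (fun x y => lt x y ∨ x = y) (goodBelow lt good) := by
  refine ⟨⟨goodBelow_injective hpred, fun p p' => rlt_or_eq_iff.trans
    (goodBelow_ssubset_iff hpred).symm⟩, fun p => ?_, fun p q ⟨hqp, hg⟩ => ?_⟩
  · obtain ⟨q, hg, hq⟩ := hpred p
    exact ⟨q, residR_goodBelow_of_relCovBy hq hg⟩
  · obtain ⟨s, hs⟩ := hsucc q hg
    refine ⟨s, ?_, residR_goodBelow_of_relCovBy hs hg⟩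
    rcases trichotomous_of lt s p with hsp | rfl | hps
    exacts [.inl hsp, .inr rfl, (hs.2 ⟨p, hqp, hps⟩).elim]

end OrderRepresentation

theorem exists_min_gt_of_injective {α : Type*} [Infinite α] {k : α → ℕ}
    (hk : Function.Injective k) (s : α) :
    ∃ t, k s < k t ∧ ∀ u, k s < k u → ¬ k u < k t := by
  set S := {n | k s < n ∧ n ∈ Set.range k}
  have hS : S.Nonempty := by
    obtain ⟨n, hn, hsn⟩ := (Set.infinite_range_of_injective hk).exists_gt (k s)
    exact ⟨n, hsn, hn⟩
  obtain ⟨hlt, t, ht⟩ := Nat.sInf_mem hS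
  exact ⟨t, ht ▸ hlt, fun u hsu hut => (ht ▸ hut).not_ge (Nat.sInf_le ⟨hsu, u, rfl⟩)⟩

theorem exists_max_lt {α : Type*} {k : α → ℕ} {s u₀ : α} (h : k u₀ < k s) :
    ∃ t, k t < k s ∧ ∀ u, k t < k u → ¬ k u < k s := by
  set S := {n | n < k s ∧ n ∈ Set.range k}
  have hS : BddAbove S := ⟨k s, fun _ hn => hn.1.le⟩
  obtain ⟨hlt, t, ht⟩ := Nat.sSup_mem (s := S) ⟨k u₀, h, u₀, rfl⟩ hS
  exact ⟨t, ht ▸ hlt, fun u htu hus => (ht ▸ htu).not_ge (le_csSup hS ⟨hus, u, rfl⟩)⟩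

section Construction

variable {f : ℕ → ℕ}

def rowKey (f : ℕ → ℕ) (i s : ℕ) : ℕ :=
  if s = 0 then 0 else if 2 ≤ s ∧ f (s - 2) = i then 1 else s + 1

theorem rowKey_eq_zero_iff {i s : ℕ} : rowKey f i s = 0 ↔ s = 0 := by
  unfold rowKey; split_ifs <;> simp_all

theorem rowKey_injective (hf : Function.Injective f) (i : ℕ) :
    Function.Injective (rowKey f i) := by
  intro s t h
  have := @hf (s - 2) (t - 2)
  unfold rowKey at h
  split_ifs at h <;> grind

theorem plt_mk_mk_iff (hf : Function.Injective f) {i s t : ℕ} :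
    plt f (i, s) (i, t) ↔ rowKey f i t < rowKey f i s := by
  have := @hf (s - 2) (t - 2)
  simp only [plt, rowlt, rowKey]
  split_ifs <;> grind

def posKey (f : ℕ → ℕ) (p : ℕ × ℕ) : ℕ ×ₗ ℕ := toLex (p.1, rowKey f p.1 p.2)

theorem plt_iff_posKey_lt (hf : Function.Injective f) {p q : ℕ × ℕ} :
    plt f p q ↔ posKey f q < posKey f p := by
  obtain ⟨i, s⟩ := p
  obtain ⟨j, t⟩ := q
  rw [posKey, posKey, Prod.Lex.toLex_lt_toLex]
  rcases eq_or_ne j i with rfl | hji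
  · simp [plt_mk_mk_iff hf]
  · simp [plt, hji, hji.symm]

theorem posKey_injective (hf : Function.Injective f) : Function.Injective (posKey f) := by
  rintro ⟨i, s⟩ ⟨j, t⟩ h
  simp only [posKey, EmbeddingLike.apply_eq_iff_eq, Prod.mk.injEq] at h
  obtain ⟨rfl, h⟩ := h
  rw [rowKey_injective hf i h]

theorem isStrictTotalOrder_plt (hf : Function.Injective f) :
    IsStrictTotalOrder (ℕ × ℕ) (plt f) := by
  have : plt f = Function.onFun (· > ·) (posKey f) := by
    funext p q
    exact propext (plt_iff_posKey_lt hf)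
  rw [this]
  exact (posKey_injective hf).isStrictTotalOrder_onFun (r := (· > ·))

theorem fst_eq_of_plt_of_plt {i s t : ℕ} {r : ℕ × ℕ} (h₁ : plt f (i, s) r)
    (h₂ : plt f r (i, t)) : r.1 = i := by
  unfold plt at h₁ h₂
  omega

theorem immPred_mk_mk_iff (hf : Function.Injective f) {i s t : ℕ} :
    ImmPred f (i, t) (i, s) ↔
      rowKey f i s < rowKey f i t ∧
        ∀ u, rowKey f i s < rowKey f i u → ¬ rowKey f i u < rowKey f i t := by
  refine and_congr (plt_mk_mk_iff hf) ⟨fun h u hsu hut => h ⟨(i, u), ?_, ?_⟩, ?_⟩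
  · exact (plt_mk_mk_iff hf).2 hut
  · exact (plt_mk_mk_iff hf).2 hsu
  · rintro h ⟨⟨j, u⟩, htr, hrs⟩
    obtain rfl : j = i := fst_eq_of_plt_of_plt htr hrs
    exact h u ((plt_mk_mk_iff hf).1 hrs) ((plt_mk_mk_iff hf).1 htr)

theorem exists_immPred (hf : Function.Injective f) (p : ℕ × ℕ) :
    ∃ q, (∀ i, q ≠ (i, 0)) ∧ ImmPred f q p := by
  obtain ⟨i, s⟩ := p
  obtain ⟨t, hst, hmin⟩ := exists_min_gt_of_injective (rowKey_injective hf i) s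
  refine ⟨(i, t), fun j h => ?_, (immPred_mk_mk_iff hf).2 ⟨hst, hmin⟩⟩
  rw [Prod.mk.injEq] at h
  rw [rowKey_eq_zero_iff.2 h.2] at hst
  omega

theorem exists_immSucc (hf : Function.Injective f) (q : ℕ × ℕ) (hq : ∀ i, q ≠ (i, 0)) :
    ∃ p, ImmPred f q p := by
  obtain ⟨i, s⟩ := q
  have h0 : rowKey f i 0 < rowKey f i s := by
    rw [rowKey_eq_zero_iff.2 rfl, Nat.pos_iff_ne_zero, Ne, rowKey_eq_zero_iff]
    exact fun hs => hq i (by rw [hs])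
  obtain ⟨t, hts, hmax⟩ := exists_max_lt h0
  exact ⟨(i, t), (immPred_mk_mk_iff hf).2 ⟨hts, hmax⟩⟩

end Construction

/-- For injective `f : ℕ → ℕ`, the map
`φ p = {p' : p' <_P p ∧ p' ≠ p_{i,0} for all i}` is a parsimonious set representation of
`(ℕ × ℕ, ≤_P)`, and `α_φ p` is the immediate `≤_P`-predecessor of `p` for every `p`. -/
theorem phi_parsimonious_alpha_eq_immPred (f : ℕ → ℕ) (hf : Function.Injective f) :
    letI φ : ℕ × ℕ → Set (ℕ × ℕ) :=
      fun p => {p' : ℕ × ℕ | plt f p' p ∧ ∀ i : ℕ, p' ≠ (i, 0)}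
    IsParsimoniousR (ple f) φ ∧
      ∀ (p q : ℕ × ℕ), residR (ple f) φ p = {q} → ImmPred f q p := by
  have := isStrictTotalOrder_plt hf
  exact ⟨isParsimoniousR_goodBelow (exists_immPred hf) (exists_immSucc hf),
    fun _ _ => relCovBy_of_residR_goodBelow (exists_immPred hf)⟩

end SatOrder
end
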